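/- Assume Schanuel's conjecture. Then i^(e^π) is transcendental, where i^w is defined as exp(w · iπ/2). -/

import Mathlib

/-!
Put `w = e^π`. Schanuel's conjecture applied to `π, πi` shows that `w` is transcendental, so the
numbers `π, iπ/2, w·iπ/2` are `ℚ`-linearly independent. Their exponentials are `w, i, i^w`.
If `i^w` were algebraic, all six numbers would be algebraic over `ℚ(π, w)`, which contains at
most two algebraically independent numbers, whereas Schanuel's conjecture provides three.
-/

/-- Schanuel's conjecture. -/
def SchanuelConjecture : Prop :=
  ∀ (n : ℕ) (α : Fin n → ℂ), LinearIndependent ℚ α →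
    ∃ g : Fin n → ℂ,
      (∀ i, g i ∈ Set.range α ∪ Set.range (fun i => Complex.exp (α i))) ∧
      AlgebraicIndependent ℚ g

open Complex Real Set

theorem AlgebraicIndependent.encard_le_of_isAlgebraic_adjoin {ι R A : Type*} [CommRing R]
    [CommRing A] [IsDomain A] [Algebra R A] {x : ι → A} (hx : AlgebraicIndependent R x)
    {s : Set A} (h : ∀ i, IsAlgebraic (Algebra.adjoin R s) (x i)) :
    ENat.card ι ≤ s.encard := by
  have : Nontrivial R := (algebraMap R A).domain_nontrivial
  have : FaithfulSMul R A :=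
    (faithfulSMul_iff_algebraMap_injective R A).mpr hx.algebraMap_injective
  let M := AlgebraicIndependent.matroid R A
  have hind : M.Indep (range x) :=
    AlgebraicIndependent.matroid_indep_iff.mpr hx.to_subtype_range
  have hsub : range x ⊆ M.closure s := by
    rintro _ ⟨i, rfl⟩
    rw [AlgebraicIndependent.matroid_closure_eq]
    exact h i
  calc ENat.card ι = (range x).encard := by
        rw [← encard_univ, ← image_univ, hx.injective.encard_image]
    _ ≤ M.eRk (M.closure s) := hind.encard_le_eRk_of_subset hsub
    _ = M.eRk s := M.eRk_closure_eq s
    _ ≤ s.encard := M.eRk_le_encard s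

theorem IsAlgebraic.tower_top_adjoin {R A : Type*} [Field R] [CommRing A] [IsDomain A]
    [Algebra R A] (s : Set A) {x : A} (hx : IsAlgebraic R x) :
    IsAlgebraic (Algebra.adjoin R s) x :=
  hx.extendScalars (algebraMap R _).injective

theorem isAlgebraic_adjoin_of_mem {R A : Type*} [CommRing R] [CommRing A] [IsDomain A]
    [Algebra R A] {s : Set A} {x : A} (hx : x ∈ s) : IsAlgebraic (Algebra.adjoin R s) x :=
  isAlgebraic_algebraMap (⟨x, Algebra.subset_adjoin hx⟩ : Algebra.adjoin R s)

theorem Complex.isAlgebraic_I : IsAlgebraic ℚ I := by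
  refine IsAlgebraic.of_pow two_pos ?_
  rw [I_sq]
  simpa using isAlgebraic_intCast (R := ℚ) (A := ℂ) (-1)

theorem linearIndependent_ofReal_cons_mul_I {n : ℕ} {a : ℝ} (ha : a ≠ 0) {u : Fin n → ℝ}
    (hu : LinearIndependent ℚ u) :
    LinearIndependent ℚ (Matrix.vecCons (a : ℂ) fun j => (u j : ℂ) * I) := by
  refine linearIndependent_finCons.mpr ⟨?_, ?_⟩
  · let f : ℝ →ₗ[ℚ] ℂ :=
      ((LinearMap.mulRight ℝ I) ∘ₗ ofRealAm.toLinearMap).restrictScalars ℚ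
    refine hu.map' f (LinearMap.ker_eq_bot.mpr fun x y hxy => ?_)
    simpa [f] using hxy
  · have hre : Submodule.span ℚ (range fun j => (u j : ℂ) * I) ≤
        LinearMap.ker (reLm.restrictScalars ℚ) :=
      Submodule.span_le.mpr (by rintro _ ⟨j, rfl⟩; simp)
    intro hmem
    simpa [ha] using hre hmem

theorem Irrational.linearIndependent_pi_I_mul_pi_div_two {w : ℝ} (hw : Irrational w) :
    LinearIndependent ℚ ![(π : ℂ), I * π / 2, w * (I * π / 2)] := by
  have hu : LinearIndependent ℚ ![π / 2, w * (π / 2)] :=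
    (LinearIndependent.pair_iff' (by positivity)).mpr fun q hq =>
      hw.ne_rat q <|
        (mul_right_cancel₀ (b := π / 2) (by positivity) (by rwa [Rat.smul_def] at hq)).symm
  convert linearIndependent_ofReal_cons_mul_I pi_ne_zero hu using 2
  ext j
  fin_cases j <;> simp <;> ring

namespace SchanuelConjecture

theorem le_card (hS : SchanuelConjecture) {n : ℕ} {α : Fin n → ℂ}
    (hα : LinearIndependent ℚ α) (s : Finset ℂ)
    (hα_alg : ∀ i, IsAlgebraic (Algebra.adjoin ℚ (s : Set ℂ)) (α i))
    (hexp_alg : ∀ i, IsAlgebraic (Algebra.adjoin ℚ (s : Set ℂ)) (exp (α i))) :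
    n ≤ s.card := by
  obtain ⟨g, hg_mem, hg⟩ := hS n α hα
  have := hg.encard_le_of_isAlgebraic_adjoin (s := s) fun i => by
    rcases hg_mem i with ⟨j, hj⟩ | ⟨j, hj⟩
    · exact hj ▸ hα_alg j
    · exact hj ▸ hexp_alg j
  simpa using this

/-- This is Gelfond's theorem, which does not need Schanuel's conjecture. -/
theorem transcendental_exp_pi (hS : SchanuelConjecture) : Transcendental ℚ (Real.exp π) := by
  intro halg
  have hα : LinearIndependent ℚ ![(π : ℂ), π * I] := by
    convert linearIndependent_ofReal_cons_mul_I pi_ne_zero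
      (linearIndependent_unique_iff.mpr pi_ne_zero : LinearIndependent ℚ ![π]) using 2
    ext j
    simp
  have hπ : IsAlgebraic (Algebra.adjoin ℚ ({(π : ℂ)} : Finset ℂ)) (π : ℂ) :=
    isAlgebraic_adjoin_of_mem (by simp)
  have := hS.le_card hα {(π : ℂ)}
    (fun i => by
      fin_cases i
      · exact hπ
      · exact hπ.mul (isAlgebraic_I.tower_top_adjoin _))
    (fun i => by
      fin_cases i
      · simpa [← ofReal_exp] using (halg.algebraMap (A := ℂ)).tower_top_adjoin _
      · simpa [exp_pi_mul_I] using (isAlgebraic_intCast (-1)).tower_top_adjoin _)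
  simp at this

end SchanuelConjecture

/-- Assuming Schanuel's conjecture, `i^(e^π) := exp (e^π · iπ/2)` is
transcendental. -/
theorem i_pow_e_pow_pi_transcendental (hS : SchanuelConjecture) :
    Transcendental ℚ
      (Complex.exp ((Real.exp Real.pi : ℂ) * (Complex.I * (Real.pi : ℂ) / 2))) := by
  intro halg
  set w := Real.exp π
  set s : Finset ℂ := {(π : ℂ), (w : ℂ)}
  have hπ : IsAlgebraic (Algebra.adjoin ℚ (s : Set ℂ)) (π : ℂ) :=
    isAlgebraic_adjoin_of_mem (by simp [s])
  have hw : IsAlgebraic (Algebra.adjoin ℚ (s : Set ℂ)) (w : ℂ) :=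
    isAlgebraic_adjoin_of_mem (by simp [s])
  have hIπ : IsAlgebraic (Algebra.adjoin ℚ (s : Set ℂ)) (I * π / 2) := by
    simpa [div_eq_mul_inv] using ((isAlgebraic_I.tower_top_adjoin _).mul hπ).mul
      ((isAlgebraic_algebraMap (2⁻¹ : ℚ)).tower_top_adjoin _)
  have h3 := hS.le_card
      hS.transcendental_exp_pi.irrational.linearIndependent_pi_I_mul_pi_div_two s
    (fun i => by
      fin_cases i
      · exact hπ
      · exact hIπ
      · exact hw.mul hIπ)
    (fun i => by
      fin_cases i
      · simpa [← ofReal_exp] using hw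
      · simpa [mul_div_right_comm _ _ (2 : ℂ), mul_comm I, exp_pi_div_two_mul_I] using
          isAlgebraic_I.tower_top_adjoin _
      · exact halg.tower_top_adjoin _)
  have h2 : s.card ≤ 2 := Finset.card_le_two
  omega
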